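/- For all s, t ∈ F₂ with s ≠ e and t ≠ e, there exists u ∈ F₂ with u ≠ e such that B(u) ⊆ B(s) and the symmetric difference (t·B(u)) Δ B(u) is infinite. -/

import Mathlib

open scoped Pointwise

/-- The free group on two generators. -/
abbrev F₂ := FreeGroup Bool

/-- The generator `a`. -/
def ga : F₂ := FreeGroup.of true

/-- The generator `b`. -/
def gb : F₂ := FreeGroup.of false

/-- The word length `|w|` of an element of the free group. -/
def wl (w : F₂) : ℕ := w.toWord.length

/-- The cylinder set `B(t)` of elements whose reduced word begins with the reduced word of `t`. -/
def cyl (t : F₂) : Set F₂ := {x | ∃ y : F₂, x = t * y ∧ wl x = wl t + wl y}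
open scoped symmDiff

namespace Aux

abbrev Ltr := Bool × Bool

def IsRed (L : List Ltr) : Prop :=
  List.Chain' (fun a b => ¬(a.1 = b.1 ∧ a.2 = !b.2)) L

theorem reduce_eq_self {L : List Ltr} (h : IsRed L) : FreeGroup.reduce L = L := by
  induction L with
  | nil => rfl
  | cons a L ih =>
    have htl : IsRed L := h.tail
    rw [FreeGroup.reduce.cons, ih htl]
    cases L with
    | nil => rfl
    | cons b L' =>
      have hab : ¬(a.1 = b.1 ∧ a.2 = !b.2) := (List.isChain_cons_cons.mp h).1
      simp [if_neg hab]

theorem chain'_of_ne {M : List Ltr}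
    (h : ∀ (A B : List Ltr) (x : Bool) (b : Bool), M ≠ A ++ (x, b) :: (x, !b) :: B) :
    IsRed M := by
  induction M with
  | nil => exact List.isChain_nil
  | cons a L ih =>
    cases L with
    | nil => exact List.isChain_singleton a
    | cons b L' =>
      refine List.isChain_cons_cons.mpr ⟨?_, ih ?_⟩
      · rintro ⟨h1, h2⟩
        exact h [] L' a.1 a.2 (by
          obtain ⟨a1, a2⟩ := a; obtain ⟨b1, b2⟩ := b
          simp only at h1 h2
          subst h1; subst h2; simp)
      · intro A B x bb hEq
        exact h (a :: A) B x bb (by rw [hEq]; rfl)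

theorem isRed_reduce (L : List Ltr) : IsRed (FreeGroup.reduce L) := by
  apply chain'_of_ne
  intro A B x b hEq
  exact FreeGroup.reduce.not hEq

theorem isRed_toWord (x : F₂) : IsRed x.toWord := by
  rw [← FreeGroup.reduce_toWord]; exact isRed_reduce _

theorem toWord_mk_of {L : List Ltr} (h : IsRed L) : (FreeGroup.mk L).toWord = L := by
  rw [FreeGroup.toWord_mk, reduce_eq_self h]

theorem wl_mk_of {L : List Ltr} (h : IsRed L) : wl (FreeGroup.mk L) = L.length := by
  rw [wl, toWord_mk_of h]

theorem IsRed.append {A B : List Ltr} (hA : IsRed A) (hB : IsRed B)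
    (hj : ∀ a ∈ A.getLast?, ∀ b ∈ B.head?, ¬(a.1 = b.1 ∧ a.2 = !b.2)) :
    IsRed (A ++ B) := List.isChain_append.mpr ⟨hA, hB, hj⟩

theorem IsRed.left {A B : List Ltr} (h : IsRed (A ++ B)) : IsRed A :=
  List.IsChain.prefix h (List.prefix_append A B)

theorem IsRed.right {A B : List Ltr} (h : IsRed (A ++ B)) : IsRed B :=
  List.IsChain.suffix h (List.suffix_append A B)

theorem isRed_replicate (n : ℕ) (ℓ : Ltr) : IsRed (List.replicate n ℓ) := by
  induction n with
  | zero => exact List.isChain_nil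
  | succ n ih =>
    cases n with
    | zero => exact List.isChain_singleton ℓ
    | succ n' =>
      rw [List.replicate_succ]
      refine List.isChain_cons_cons.mpr ⟨?_, by rwa [← List.replicate_succ]⟩
      rintro ⟨-, h2⟩
      simp at h2

theorem mk_replicate (n : ℕ) (ℓ : Ltr) :
    FreeGroup.mk (List.replicate n ℓ) = FreeGroup.mk [ℓ] ^ n := by
  induction n with
  | zero => simp [FreeGroup.one_eq_mk]
  | succ n ih =>
    rw [pow_succ, ← ih, FreeGroup.mul_mk, ← List.replicate_succ']

theorem mem_cyl_iff {u x : F₂} : x ∈ cyl u ↔ u.toWord <+: x.toWord := by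
  constructor
  · rintro ⟨y, rfl, hlen⟩
    have h1 : u * y = FreeGroup.mk (u.toWord ++ y.toWord) := by
      rw [← FreeGroup.mul_mk, FreeGroup.mk_toWord, FreeGroup.mk_toWord]
    have h2 : (u * y).toWord = FreeGroup.reduce (u.toWord ++ y.toWord) := by
      rw [h1, FreeGroup.toWord_mk]
    have h3 : List.Sublist (FreeGroup.reduce (u.toWord ++ y.toWord)) (u.toWord ++ y.toWord) :=
      (FreeGroup.reduce.red).sublist
    have h4 : (u * y).toWord = u.toWord ++ y.toWord := by
      rw [h2]
      refine h3.eq_of_length ?_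
      rw [← h2, List.length_append]
      exact hlen
    rw [h4]
    exact List.prefix_append _ _
  · rintro ⟨tl, htl⟩
    have hred : IsRed (u.toWord ++ tl) := by rw [htl]; exact isRed_toWord x
    refine ⟨FreeGroup.mk tl, ?_, ?_⟩
    · rw [← FreeGroup.mk_toWord (x := u), FreeGroup.mul_mk, htl, FreeGroup.mk_toWord]
    · rw [wl, ← htl, List.length_append, wl, wl, toWord_mk_of hred.right]

theorem strip (ℓ : Ltr) (W : List Ltr) (hW : IsRed W) :
    ∃ (P : List Ltr) (z : ℤ), IsRed P ∧ (∀ a ∈ P.getLast?, a.1 ≠ ℓ.1) ∧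
      FreeGroup.mk W = FreeGroup.mk P * (FreeGroup.mk [ℓ]) ^ z ∧
      z.natAbs ≤ W.length ∧ P.length ≤ W.length := by
  induction W using List.reverseRecOn with
  | nil => exact ⟨[], 0, List.isChain_nil, by simp, by simp, by simp, by simp⟩
  | append_singleton W' a ih =>
    have hW' : IsRed W' := hW.left
    by_cases ha : a.1 = ℓ.1
    · obtain ⟨P, z, hP, hPl, heq, hz, hPlen⟩ := ih hW'
      have hsplit : FreeGroup.mk (W' ++ [a]) = FreeGroup.mk W' * FreeGroup.mk [a] := by
        rw [FreeGroup.mul_mk]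
      by_cases hb : a.2 = ℓ.2
      · refine ⟨P, z + 1, hP, hPl, ?_, ?_, by simp; omega⟩
        · have : a = ℓ := Prod.ext ha hb
          rw [hsplit, heq, this, zpow_add_one, mul_assoc]
        · simp only [List.length_append, List.length_singleton]
          omega
      · refine ⟨P, z - 1, hP, hPl, ?_, ?_, by simp; omega⟩
        · have : FreeGroup.mk [a] = (FreeGroup.mk [ℓ])⁻¹ := by
            rw [FreeGroup.inv_mk]
            congr 1
            simp [FreeGroup.invRev]
            refine Prod.ext ha ?_
            simp only []
            cases h1 : a.2 <;> cases h2 : ℓ.2 <;> simp_all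
          rw [hsplit, heq, this, zpow_sub_one, mul_assoc]
        · simp only [List.length_append, List.length_singleton]
          omega
    · refine ⟨W' ++ [a], 0, hW, ?_, by simp, by simp, le_refl _⟩
      intro x hx
      rw [List.getLast?_concat] at hx
      simp at hx
      exact hx ▸ ha

end Aux

namespace Aux

theorem wl_mul_le (x y : F₂) : wl (x * y) ≤ wl x + wl y := by
  simpa [wl, FreeGroup.norm] using FreeGroup.norm_mul_le x y

end Aux


open Aux in
/-- For all `s, t ≠ e` there is `u ≠ e` with `B(u) ⊆ B(s)` and `(t·B(u)) Δ B(u)` infinite. -/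
theorem stmt_8 (s t : F₂) (hs : s ≠ 1) (ht : t ≠ 1) :
    ∃ u : F₂, u ≠ 1 ∧ cyl u ⊆ cyl s ∧ ((t • cyl u) ∆ (cyl u)).Infinite := by
  classical
  set S := s.toWord with hSdef
  have hS : S ≠ [] := fun h => hs (FreeGroup.toWord_eq_nil_iff.mp h)
  set ℓ : Ltr := S.getLast hS with hℓdef
  set c : F₂ := FreeGroup.mk [ℓ] with hcdef
  have hmkS : FreeGroup.mk S = s := FreeGroup.mk_toWord
  have hgetS : S.getLast? = some ℓ := List.getLast?_eq_getLast hS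
  have hRll : ¬(ℓ.1 = ℓ.1 ∧ ℓ.2 = !ℓ.2) := by simp
  -- basic facts about u_N = mk (S ++ replicate N ℓ)
  have hred : ∀ N : ℕ, IsRed (S ++ List.replicate N ℓ) := by
    intro N
    refine (isRed_toWord s).append (isRed_replicate N ℓ) ?_
    intro a ha b hb
    rw [hgetS] at ha
    obtain rfl : ℓ = a := by simpa using ha
    have hb' : b = ℓ := List.eq_of_mem_replicate (List.mem_of_mem_head? hb)
    rw [hb']; exact hRll
  have htw : ∀ N : ℕ, (FreeGroup.mk (S ++ List.replicate N ℓ)).toWord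
      = S ++ List.replicate N ℓ := fun N => toWord_mk_of (hred N)
  have hu_eq : ∀ N : ℕ, FreeGroup.mk (S ++ List.replicate N ℓ) = s * c ^ N := by
    intro N
    rw [← FreeGroup.mul_mk, hmkS, mk_replicate]
  have hune : ∀ N : ℕ, FreeGroup.mk (S ++ List.replicate N ℓ) ≠ 1 := by
    intro N h
    have := FreeGroup.toWord_eq_nil_iff.mpr h
    rw [htw N] at this
    exact hS (List.append_eq_nil_iff.mp this).1
  have husub : ∀ N : ℕ, cyl (FreeGroup.mk (S ++ List.replicate N ℓ)) ⊆ cyl s := by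
    intro N x hx
    have h1 := mem_cyl_iff.mp hx
    rw [htw N] at h1
    exact mem_cyl_iff.mpr ((List.prefix_append S _).trans h1)
  by_cases hbad : ∃ d : ℤ, t = s * c ^ d * s⁻¹
  · obtain ⟨d, hd⟩ := hbad
    have hd0 : d ≠ 0 := by
      rintro rfl
      apply ht
      rw [hd]; group
    set m : Ltr := (!ℓ.1, true) with hmdef
    have hmℓ : m.1 ≠ ℓ.1 := by simp [hmdef]
    -- reducedness of S ++ m-run
    have hw1 : ∀ k : ℕ, IsRed (S ++ List.replicate (k+1) m) := by
      intro k
      refine (isRed_toWord s).append (isRed_replicate _ m) ?_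
      intro a ha b hb
      rw [hgetS] at ha
      obtain rfl : ℓ = a := by simpa using ha
      have hb' : b = m := List.eq_of_mem_replicate (List.mem_of_mem_head? hb)
      rw [hb']
      rintro ⟨h1, -⟩
      exact hmℓ h1.symm
    have hsm_eq : ∀ k : ℕ, FreeGroup.mk (S ++ List.replicate (k+1) m)
        = s * (FreeGroup.mk [m]) ^ (k+1) := by
      intro k
      rw [← FreeGroup.mul_mk, hmkS, mk_replicate]
    -- N ≥ 1 case facts
    have hnotin : ∀ N : ℕ, 1 ≤ N → ∀ k : ℕ,
        FreeGroup.mk (S ++ List.replicate (k+1) m)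
          ∉ cyl (FreeGroup.mk (S ++ List.replicate N ℓ)) := by
      intro N hN1 k hmem
      have hpre := mem_cyl_iff.mp hmem
      rw [htw N, toWord_mk_of (hw1 k)] at hpre
      have h2 : List.replicate N ℓ <+: List.replicate (k+1) m :=
        (List.prefix_append_right_inj S).mp hpre
      have h3 : ℓ ∈ List.replicate (k+1) m :=
        h2.subset (List.mem_replicate.mpr ⟨by omega, rfl⟩)
      have h4 : ℓ = m := List.eq_of_mem_replicate h3
      exact hmℓ (by rw [h4])
    have hw2 : ∀ N : ℕ, 1 ≤ N → ∀ k : ℕ,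
        IsRed ((S ++ List.replicate N ℓ) ++ List.replicate (k+1) m) := by
      intro N hN1 k
      rw [List.append_assoc]
      refine (isRed_toWord s).append ?_ ?_
      · refine (isRed_replicate N ℓ).append (isRed_replicate _ m) ?_
        intro a ha b hb
        obtain ⟨N', rfl⟩ : ∃ N', N = N' + 1 := ⟨N - 1, by omega⟩
        rw [List.replicate_succ', List.getLast?_concat] at ha
        obtain rfl : ℓ = a := by simpa using ha
        have hb' : b = m := List.eq_of_mem_replicate (List.mem_of_mem_head? hb)
        rw [hb']
        rintro ⟨h1, -⟩
        exact hmℓ h1.symm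
      · intro a ha b hb
        rw [hgetS] at ha
        obtain rfl : ℓ = a := by simpa using ha
        obtain ⟨N', rfl⟩ : ∃ N', N = N' + 1 := ⟨N - 1, by omega⟩
        rw [List.replicate_succ] at hb
        simp only [List.cons_append, List.head?_cons, Option.mem_some_iff] at hb
        rw [← hb]; exact hRll
    have hin : ∀ N : ℕ, 1 ≤ N → ∀ k : ℕ,
        FreeGroup.mk (S ++ List.replicate N ℓ) * (FreeGroup.mk [m]) ^ (k+1)
          ∈ cyl (FreeGroup.mk (S ++ List.replicate N ℓ)) := by
      intro N hN1 k
      have he : FreeGroup.mk (S ++ List.replicate N ℓ) * (FreeGroup.mk [m]) ^ (k+1)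
          = FreeGroup.mk ((S ++ List.replicate N ℓ) ++ List.replicate (k+1) m) := by
        rw [← mk_replicate, FreeGroup.mul_mk]
      apply mem_cyl_iff.mpr
      rw [he, toWord_mk_of (hw2 N hN1 k), htw N]
      exact List.prefix_append _ _
    rcases lt_or_gt_of_ne hd0 with hdneg | hdpos
    · -- d < 0 : family t * (u * m^(k+1)) = s * m^(k+1)
      set N := (-d).toNat with hNdef
      have hdN : (N : ℤ) = -d := Int.toNat_of_nonneg (by omega)
      have hN1 : 1 ≤ N := by omega
      refine ⟨FreeGroup.mk (S ++ List.replicate N ℓ), hune N, husub N, ?_⟩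
      have hcd : c ^ N = c ^ (-d) := by rw [← zpow_natCast c N, hdN]
      have hee : ∀ k : ℕ, t * (FreeGroup.mk (S ++ List.replicate N ℓ)
          * (FreeGroup.mk [m]) ^ (k+1))
          = FreeGroup.mk (S ++ List.replicate (k+1) m) := by
        intro k
        rw [hsm_eq k, hd, hu_eq N, hcd]
        group
      apply Set.infinite_of_injective_forall_mem
        (f := fun k : ℕ => t * (FreeGroup.mk (S ++ List.replicate N ℓ)
          * (FreeGroup.mk [m]) ^ (k+1)))
      · intro k1 k2 hk
        have h3 : wl (FreeGroup.mk (S ++ List.replicate (k1+1) m))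
            = wl (FreeGroup.mk (S ++ List.replicate (k2+1) m)) := by
          rw [← hee k1, ← hee k2]; exact congrArg wl hk
        rw [wl_mk_of (hw1 k1), wl_mk_of (hw1 k2)] at h3
        simp only [List.length_append, List.length_replicate] at h3
        omega
      · intro k
        apply Set.mem_symmDiff.mpr
        left
        constructor
        · exact Set.smul_mem_smul_set (hin N hN1 k)
        · rw [hee k]
          exact hnotin N hN1 k
    · -- d > 0 : family u * m^(k+1)
      set N := d.toNat with hNdef
      have hdN : (N : ℤ) = d := Int.toNat_of_nonneg (by omega)
      have hN1 : 1 ≤ N := by omega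
      refine ⟨FreeGroup.mk (S ++ List.replicate N ℓ), hune N, husub N, ?_⟩
      have hcd : c ^ N = c ^ d := by rw [← zpow_natCast c N, hdN]
      have hee2 : ∀ k : ℕ, FreeGroup.mk (S ++ List.replicate N ℓ)
          * (FreeGroup.mk [m]) ^ (k+1)
          = FreeGroup.mk ((S ++ List.replicate N ℓ) ++ List.replicate (k+1) m) := by
        intro k
        rw [← mk_replicate, FreeGroup.mul_mk]
      apply Set.infinite_of_injective_forall_mem
        (f := fun k : ℕ => FreeGroup.mk (S ++ List.replicate N ℓ)
          * (FreeGroup.mk [m]) ^ (k+1))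
      · intro k1 k2 hk
        have h3 : wl (FreeGroup.mk ((S ++ List.replicate N ℓ) ++ List.replicate (k1+1) m))
            = wl (FreeGroup.mk ((S ++ List.replicate N ℓ) ++ List.replicate (k2+1) m)) := by
          rw [← hee2 k1, ← hee2 k2]; exact congrArg wl hk
        rw [wl_mk_of (hw2 N hN1 k1), wl_mk_of (hw2 N hN1 k2)] at h3
        simp only [List.length_append, List.length_replicate] at h3
        omega
      · intro k
        apply Set.mem_symmDiff.mpr
        right
        constructor
        · exact hin N hN1 k
        · intro hmem
          rw [Set.mem_smul_set_iff_inv_smul_mem, smul_eq_mul] at hmem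
          have he : t⁻¹ * (FreeGroup.mk (S ++ List.replicate N ℓ)
              * (FreeGroup.mk [m]) ^ (k+1))
              = FreeGroup.mk (S ++ List.replicate (k+1) m) := by
            rw [hsm_eq k, hd, hu_eq N, hcd]
            group
          rw [he] at hmem
          exact hnotin N hN1 k hmem
  · -- generic case
    obtain ⟨P, z, hPred, hPlast, hPeq, hz, hPlen⟩ := strip ℓ (t*s).toWord (isRed_toWord _)
    rw [FreeGroup.mk_toWord] at hPeq
    have hWlen : (t*s).toWord.length ≤ wl t + wl s := wl_mul_le t s
    set N : ℕ := wl t + wl s + 1 with hNdef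
    have hN1 : 1 ≤ N := by omega
    refine ⟨FreeGroup.mk (S ++ List.replicate N ℓ), hune N, husub N, ?_⟩
    have hfk : ∀ k : ℕ, t * (FreeGroup.mk (S ++ List.replicate N ℓ) * c ^ (k+1))
        = FreeGroup.mk P * c ^ (z + (N + k + 1 : ℕ)) := by
      intro k
      rw [hu_eq N, ← mul_assoc, ← mul_assoc, mul_assoc (t*s), ← pow_add, hPeq,
        mul_assoc, ← zpow_natCast c (N + (k+1)), ← zpow_add]
      have hnk : N + (k+1) = N + k + 1 := by omega
      rw [hnk, ← hcdef]
    have hM1 : ∀ k : ℕ, 1 ≤ z + (N + k + 1 : ℕ) := by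
      intro k
      have : z.natAbs ≤ wl t + wl s := le_trans hz hWlen
      omega
    have hfktw : ∀ k : ℕ, (t * (FreeGroup.mk (S ++ List.replicate N ℓ) * c ^ (k+1))).toWord
        = P ++ List.replicate (z + (N + k + 1 : ℕ)).toNat ℓ := by
      intro k
      have h1 : c ^ (z + (N + k + 1 : ℕ)) = c ^ ((z + (N + k + 1 : ℕ)).toNat) := by
        rw [← zpow_natCast c (z + (N + k + 1 : ℕ)).toNat,
          Int.toNat_of_nonneg (by have := hM1 k; omega)]
      rw [hfk k, h1, ← mk_replicate, FreeGroup.mul_mk]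
      apply toWord_mk_of
      refine hPred.append (isRed_replicate _ ℓ) ?_
      intro a ha b hb
      have hb' : b = ℓ := List.eq_of_mem_replicate (List.mem_of_mem_head? hb)
      rintro ⟨h1, -⟩
      exact hPlast a ha (by rw [h1, hb'])
    have hnot : ∀ k : ℕ, t * (FreeGroup.mk (S ++ List.replicate N ℓ) * c ^ (k+1))
        ∉ cyl (FreeGroup.mk (S ++ List.replicate N ℓ)) := by
      intro k hmem
      have hpre := mem_cyl_iff.mp hmem
      rw [htw N, hfktw k] at hpre
      have hPU : P <+: S ++ List.replicate N ℓ := by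
        rcases List.prefix_or_prefix_of_prefix (List.prefix_append P _) hpre with h | h
        · exact h
        · exfalso
          have h1 := h.length_le
          rw [List.length_append, List.length_replicate] at h1
          have h2 : S.length = wl s := rfl
          have h3 : P.length ≤ wl t + wl s := le_trans hPlen hWlen
          have h4 : 1 ≤ S.length := List.length_pos_iff.mpr hS
          omega
      obtain ⟨Q, hQ⟩ := hPU
      have hQrep : Q <+: List.replicate (z + (N + k + 1 : ℕ)).toNat ℓ := by
        refine (List.prefix_append_right_inj P).mp ?_
        rw [hQ]; exact hpre
      have hQeq : Q = List.replicate Q.length ℓ :=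
        List.eq_replicate_of_mem (fun b hb => List.eq_of_mem_replicate (hQrep.subset hb))
      have hPs : s * c ^ N = FreeGroup.mk P * c ^ (Q.length) := by
        rw [← hu_eq N, ← hQ]
        conv_lhs => rw [hQeq]
        rw [← FreeGroup.mul_mk, mk_replicate]
      apply hbad
      refine ⟨(N : ℤ) - Q.length + z, ?_⟩
      have hPv : FreeGroup.mk P = s * c ^ ((N : ℤ) - Q.length) := by
        have e1 : FreeGroup.mk P = s * c ^ N * (c ^ Q.length)⁻¹ :=
          eq_mul_inv_of_mul_eq hPs.symm
        rw [e1, ← zpow_natCast c N, ← zpow_natCast c Q.length, ← zpow_neg, mul_assoc,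
          ← zpow_add, Int.sub_eq_add_neg]
      have e2 : t = FreeGroup.mk P * c ^ z * s⁻¹ := by
        rw [← hPeq]; group
      rw [e2, hPv, mul_assoc s (c ^ ((N:ℤ) - Q.length)) (c ^ z), ← zpow_add]
    apply Set.infinite_of_injective_forall_mem
      (f := fun k : ℕ => t * (FreeGroup.mk (S ++ List.replicate N ℓ) * c ^ (k+1)))
    · intro k1 k2 hk
      have h3 := congrArg wl hk
      simp only [wl] at h3
      rw [hfktw k1, hfktw k2, List.length_append, List.length_append,
        List.length_replicate, List.length_replicate] at h3
      have m1 := hM1 k1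
      have m2 := hM1 k2
      omega
    · intro k
      apply Set.mem_symmDiff.mpr
      left
      refine ⟨?_, hnot k⟩
      have hin2 : FreeGroup.mk (S ++ List.replicate N ℓ) * c ^ (k+1)
          ∈ cyl (FreeGroup.mk (S ++ List.replicate N ℓ)) := by
        have he : FreeGroup.mk (S ++ List.replicate N ℓ) * c ^ (k+1)
            = FreeGroup.mk (S ++ List.replicate (N + (k+1)) ℓ) := by
          rw [← mk_replicate, FreeGroup.mul_mk, List.append_assoc, ← List.replicate_add]
        apply mem_cyl_iff.mpr
        rw [he, htw N, htw (N + (k+1))]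
        refine (List.prefix_append_right_inj S).mpr ?_
        exact ⟨List.replicate (k+1) ℓ, (List.replicate_add N (k+1) ℓ).symm⟩
      exact Set.smul_mem_smul_set hin2
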